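/- arXiv:1703.00918 — 2 statements merged into one kernel-verified Lean document; each statement's English description precedes it below -/
import Mathlib

section
/- Let n ≥ 2 and let X = μ + R•(A *ᵥ U) be an elliptically distributed random vector with benchmark Y = a ⬝ᵥ X and regression vector β = (1/â) • (Σ *ᵥ a). Define the residuals ε_i := X_i − β_i·Y for i = 1,…,n. Then for every Borel set B₁ ⊆ ℝ such that B := {Y ∈ B₁} has P[B] > 0 and every i, Cov_B[Y, ε_i] = 0; that is, the least-squares regression of each coordinate X_i on Y remains valid under conditioning on events determined by Y. -/
open MeasureTheory ProbabilityTheory Matrix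

/-- Expectation of a real random variable under the conditional probability `P[|B]`. -/
noncomputable def condE {Ω : Type*} [MeasurableSpace Ω] (P : Measure Ω) (B : Set Ω)
    (f : Ω → ℝ) : ℝ :=
  ∫ ω, f ω ∂(P[|B])

/-- Conditional covariance on the event `B`. -/
noncomputable def condCov {Ω : Type*} [MeasurableSpace Ω] (P : Measure Ω) (B : Set Ω)
    (f g : Ω → ℝ) : ℝ :=
  condE P B fun ω => (f ω - condE P B f) * (g ω - condE P B g)

/-!
Write `b = Aᵀ a`. Then `Y = a ⬝ᵥ μ + R (b ⬝ᵥ U)` and `ε_i = c + R (v ⬝ᵥ U)` for a constant `c`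
and `v = Aᵢ - βᵢ b`; the choice of `β` is exactly what makes `v ⬝ᵥ b = 0`. The reflection of `ℝⁿ`
in the line `ℝ b` is orthogonal, fixes `b ⬝ᵥ u` and negates `v ⬝ᵥ u`. By rotation invariance of
`U` and independence from `R`, the pair `(Y, ε_i - c)` therefore has the same law as
`(Y, -(ε_i - c))`, and this symmetry survives conditioning on `{Y ∈ B₁}`. Hence `ε_i` has
conditional mean `c`, and `(Y - E_B Y) (ε_i - c)` integrates to zero against `P[|B]`.
-/

section LineReflection

variable {ι : Type*} [Fintype ι]

lemma sub_div_smul_dotProduct_self (b w : ι → ℝ) :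
    (w - ((w ⬝ᵥ b) / (b ⬝ᵥ b)) • b) ⬝ᵥ b = 0 := by
  rcases eq_or_ne b 0 with rfl | hb
  · simp
  rw [sub_dotProduct, smul_dotProduct, smul_eq_mul,
    div_mul_cancel₀ _ fun h => hb (dotProduct_self_eq_zero.mp h), sub_self]

variable [DecidableEq ι]

/-- For `b = 0` this is `-1` (as `2 / 0 = 0`), the reflection in the zero subspace, so the lemmas
below hold for every `b`. -/
noncomputable def lineReflection (b : ι → ℝ) : Matrix ι ι ℝ :=
  (2 / (b ⬝ᵥ b)) • vecMulVec b b - 1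

variable (b : ι → ℝ)

lemma lineReflection_mulVec (u : ι → ℝ) :
    lineReflection b *ᵥ u = (2 / (b ⬝ᵥ b) * (b ⬝ᵥ u)) • b - u := by
  rw [lineReflection, sub_mulVec, smul_mulVec, vecMulVec_mulVec, one_mulVec, op_smul_eq_smul,
    smul_smul]

lemma dotProduct_lineReflection_mulVec (u : ι → ℝ) :
    b ⬝ᵥ (lineReflection b *ᵥ u) = b ⬝ᵥ u := by
  rcases eq_or_ne b 0 with rfl | hb
  · simp
  have hbb : b ⬝ᵥ b ≠ 0 := fun h => hb (dotProduct_self_eq_zero.mp h)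
  rw [lineReflection_mulVec, dotProduct_sub, dotProduct_smul, smul_eq_mul]
  field_simp
  ring

lemma dotProduct_lineReflection_mulVec_of_dotProduct_eq_zero {v : ι → ℝ} (hv : v ⬝ᵥ b = 0)
    (u : ι → ℝ) : v ⬝ᵥ (lineReflection b *ᵥ u) = -(v ⬝ᵥ u) := by
  rw [lineReflection_mulVec, dotProduct_sub, dotProduct_smul, hv, smul_zero, zero_sub]

lemma lineReflection_mulVec_lineReflection_mulVec (u : ι → ℝ) :
    lineReflection b *ᵥ (lineReflection b *ᵥ u) = u := by
  rw [lineReflection_mulVec b (lineReflection b *ᵥ u), dotProduct_lineReflection_mulVec,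
    lineReflection_mulVec, sub_sub_cancel]

lemma transpose_lineReflection : (lineReflection b)ᵀ = lineReflection b := by
  rw [lineReflection, transpose_sub, transpose_smul, transpose_vecMulVec, transpose_one]

lemma lineReflection_mul_transpose : lineReflection b * (lineReflection b)ᵀ = 1 := by
  rw [transpose_lineReflection, ext_iff_mulVec]
  intro u
  rw [← mulVec_mulVec, lineReflection_mulVec_lineReflection_mulVec, one_mulVec]

end LineReflection

section EllipticalCoordinates

variable {ι : Type*} [Fintype ι] (A : Matrix ι ι ℝ) (a μ u : ι → ℝ) (r : ℝ)

lemma dotProduct_add_smul_mulVec :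
    a ⬝ᵥ (μ + r • (A *ᵥ u)) = a ⬝ᵥ μ + r * ((Aᵀ *ᵥ a) ⬝ᵥ u) := by
  rw [dotProduct_add, dotProduct_smul, smul_eq_mul, dotProduct_mulVec, ← mulVec_transpose]

lemma add_smul_mulVec_apply_sub_mul_dotProduct (i : ι) (β : ℝ) :
    (μ + r • (A *ᵥ u)) i - β * (a ⬝ᵥ (μ + r • (A *ᵥ u))) =
      (μ i - β * (a ⬝ᵥ μ)) + r * ((A i - β • (Aᵀ *ᵥ a)) ⬝ᵥ u) := by
  rw [dotProduct_add_smul_mulVec, sub_dotProduct, smul_dotProduct, smul_eq_mul, Pi.add_apply,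
    Pi.smul_apply, smul_eq_mul, show (A *ᵥ u) i = A i ⬝ᵥ u from rfl]
  ring

lemma one_div_dotProduct_smul_mulVec_apply (i : ι) :
    ((1 / (a ⬝ᵥ ((A * Aᵀ) *ᵥ a))) • ((A * Aᵀ) *ᵥ a)) i =
      (A i ⬝ᵥ (Aᵀ *ᵥ a)) / ((Aᵀ *ᵥ a) ⬝ᵥ (Aᵀ *ᵥ a)) := by
  rw [← mulVec_mulVec, dotProduct_mulVec, ← mulVec_transpose, Pi.smul_apply, smul_eq_mul,
    one_div_mul_eq_div]
  rfl

end EllipticalCoordinates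

section Symmetry

variable {Ω : Type*} [MeasurableSpace Ω]

lemma ProbabilityTheory.map_cond_preimage {α : Type*} [MeasurableSpace α] (P : Measure Ω)
    {f : Ω → α} (hf : Measurable f) {s : Set α} (hs : MeasurableSet s) :
    (P[|f ⁻¹' s]).map f = (P.map f)[|s] := by
  rw [cond, cond, Measure.map_smul, ← Measure.restrict_map hf hs, Measure.map_apply hf hs]

variable {P : Measure Ω} {Y W : Ω → ℝ}

lemma integral_eq_zero_of_map_prodMk_neg (hY : Measurable Y) (hW : Measurable W)
    (hsymm : P.map (fun ω => (Y ω, W ω)) = P.map (fun ω => (Y ω, -W ω)))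
    {F : ℝ × ℝ → ℝ} (hF : Measurable F) (hodd : ∀ y w, F (y, -w) = -F (y, w)) :
    ∫ ω, F (Y ω, W ω) ∂P = 0 := by
  have h := congrArg (fun Q : Measure (ℝ × ℝ) => ∫ p, F p ∂Q) hsymm
  rw [integral_map (hY.prodMk hW).aemeasurable hF.aestronglyMeasurable,
    integral_map (φ := fun ω => (Y ω, -W ω)) (hY.prodMk hW.neg).aemeasurable
      hF.aestronglyMeasurable] at h
  simp only [hodd, integral_neg] at h
  linarith

lemma map_prodMk_neg_cond_preimage (hY : Measurable Y) (hW : Measurable W)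
    (hsymm : P.map (fun ω => (Y ω, W ω)) = P.map (fun ω => (Y ω, -W ω)))
    {s : Set ℝ} (hs : MeasurableSet s) :
    (P[|Y ⁻¹' s]).map (fun ω => (Y ω, W ω)) = (P[|Y ⁻¹' s]).map (fun ω => (Y ω, -W ω)) := by
  have hpre : ∀ V : Ω → ℝ, Y ⁻¹' s = (fun ω => (Y ω, V ω)) ⁻¹' (s ×ˢ Set.univ) := fun V => by
    ext; simp
  calc (P[|Y ⁻¹' s]).map (fun ω => (Y ω, W ω))
      = (P.map (fun ω => (Y ω, W ω)))[|s ×ˢ Set.univ] := by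
        rw [hpre W, map_cond_preimage P (hY.prodMk hW) (hs.prod .univ)]
    _ = (P.map (fun ω => (Y ω, -W ω)))[|s ×ˢ Set.univ] := by rw [hsymm]
    _ = (P[|Y ⁻¹' s]).map (fun ω => (Y ω, -W ω)) := by
        rw [hpre (fun ω => -W ω),
          map_cond_preimage P (f := fun ω => (Y ω, -W ω)) (hY.prodMk hW.neg) (hs.prod .univ)]

lemma condCov_const_add_eq_zero_of_map_prodMk_neg {B : Set Ω} (hY : Measurable Y)
    (hW : Measurable W)
    (hsymm : (P[|B]).map (fun ω => (Y ω, W ω)) = (P[|B]).map (fun ω => (Y ω, -W ω)))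
    (hWint : Integrable W (P[|B])) (c : ℝ) :
    condCov P B Y (fun ω => c + W ω) = 0 := by
  rcases eq_zero_or_isProbabilityMeasure (P[|B]) with h0 | _
  · simp [condCov, condE, h0]
  have hW0 : ∫ ω, W ω ∂(P[|B]) = 0 :=
    integral_eq_zero_of_map_prodMk_neg hY hW hsymm measurable_snd fun _ _ => rfl
  have hmean : condE P B (fun ω => c + W ω) = c := by
    rw [condE, integral_add (integrable_const c) hWint, hW0, integral_const]
    simp
  rw [condCov, hmean]
  simp only [add_sub_cancel_left]
  exact integral_eq_zero_of_map_prodMk_neg hY hW hsymm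
    (F := fun p => (p.1 - condE P B Y) * p.2) (by fun_prop) fun _ _ => mul_neg _ _

end Symmetry

lemma integrable_const_dotProduct {Ω ι : Type*} [MeasurableSpace Ω] [Fintype ι] {P : Measure Ω}
    (a : ι → ℝ) {X : Ω → ι → ℝ} (hX : ∀ j, Integrable (fun ω => X ω j) P) :
    Integrable (fun ω => a ⬝ᵥ X ω) P :=
  integrable_finsetSum _ fun j _ => (hX j).const_mul (a j)

lemma MeasureTheory.Integrable.cond {Ω : Type*} [MeasurableSpace Ω] {P : Measure Ω}
    {f : Ω → ℝ} (hf : Integrable f P) (B : Set Ω) : Integrable f (P[|B]) := by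
  rcases eq_or_ne (P B) 0 with hB | hB
  · rw [cond_eq_zero_of_meas_eq_zero hB]
    exact integrable_zero_measure
  · exact hf.restrict.smul_measure (ENNReal.inv_ne_top.mpr hB)

section Elliptical

variable {Ω : Type*} [MeasurableSpace Ω] {P : Measure Ω} [IsFiniteMeasure P]

lemma ProbabilityTheory.IndepFun.map_prodMk_comp_right_eq {α β : Type*} [MeasurableSpace α]
    [MeasurableSpace β] {R : Ω → α} {U : Ω → β} (hindep : IndepFun R U P) (hR : Measurable R)
    (hU : Measurable U) {g : β → β} (hg : Measurable g)
    (hgU : P.map (fun ω => g (U ω)) = P.map U) :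
    P.map (fun ω => (R ω, g (U ω))) = P.map (fun ω => (R ω, U ω)) := by
  have hgUm : Measurable fun ω => g (U ω) := hg.comp hU
  rw [(indepFun_iff_map_prod_eq_prod_map_map hR.aemeasurable hgUm.aemeasurable).mp
      (hindep.comp measurable_id hg),
    (indepFun_iff_map_prod_eq_prod_map_map hR.aemeasurable hU.aemeasurable).mp hindep, hgU]

lemma map_prodMk_neg_of_map_lineReflection_eq {ι : Type*} [Fintype ι] [DecidableEq ι]
    {R : Ω → ℝ} {U : Ω → ι → ℝ} (hindep : IndepFun R U P) (hR : Measurable R) (hU : Measurable U)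
    {b v : ι → ℝ} (hv : v ⬝ᵥ b = 0) (hrefl : P.map (fun ω => lineReflection b *ᵥ U ω) = P.map U)
    (y₀ : ℝ) :
    P.map (fun ω => (y₀ + R ω * (b ⬝ᵥ U ω), R ω * (v ⬝ᵥ U ω))) =
      P.map (fun ω => (y₀ + R ω * (b ⬝ᵥ U ω), -(R ω * (v ⬝ᵥ U ω)))) := by
  let φ : ℝ × (ι → ℝ) → ℝ × ℝ := fun p => (y₀ + p.1 * (b ⬝ᵥ p.2), p.1 * (v ⬝ᵥ p.2))
  have hφ : Measurable φ := by fun_prop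
  have hO : Measurable fun u : ι → ℝ => lineReflection b *ᵥ u := by fun_prop
  calc P.map (fun ω => (y₀ + R ω * (b ⬝ᵥ U ω), R ω * (v ⬝ᵥ U ω)))
      = (P.map fun ω => (R ω, U ω)).map φ := by rw [Measure.map_map hφ (hR.prodMk hU)]; rfl
    _ = (P.map fun ω => (R ω, lineReflection b *ᵥ U ω)).map φ := by
        rw [hindep.map_prodMk_comp_right_eq hR hU hO hrefl]
    _ = P.map (fun ω => (y₀ + R ω * (b ⬝ᵥ U ω), -(R ω * (v ⬝ᵥ U ω)))) := by
        rw [Measure.map_map hφ (by fun_prop : Measurable fun ω => (R ω, lineReflection b *ᵥ U ω))]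
        congr 1
        funext ω
        simp [φ, dotProduct_lineReflection_mulVec,
          dotProduct_lineReflection_mulVec_of_dotProduct_eq_zero b hv]

end Elliptical

theorem regression_residuals_uncorrelated_under_conditioning_general
    {Ω : Type*} [MeasurableSpace Ω] (P : Measure Ω) [IsProbabilityMeasure P]
    (n : ℕ)
    (R : Ω → ℝ) (U : Ω → Fin n → ℝ) (hR : Measurable R) (hU : Measurable U)
    (hUrot : ∀ O : Matrix (Fin n) (Fin n) ℝ, O * Oᵀ = 1 →
      Measure.map (fun ω => O *ᵥ U ω) P = Measure.map U P)
    (hindep : IndepFun R U P)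
    (μv : Fin n → ℝ) (A : Matrix (Fin n) (Fin n) ℝ)
    (a : Fin n → ℝ)
    (X : Ω → Fin n → ℝ) (hX : X = fun ω => μv + R ω • (A *ᵥ U ω))
    (Y : Ω → ℝ) (hY : Y = fun ω => a ⬝ᵥ X ω)
    (hXL2 : ∀ i, MemLp (fun ω => X ω i) 2 P)
    (S : Matrix (Fin n) (Fin n) ℝ) (hS : S = A * Aᵀ)
    (ahat : ℝ) (hahat : ahat = a ⬝ᵥ (S *ᵥ a))
    (β : Fin n → ℝ) (hβ : β = (1 / ahat) • (S *ᵥ a))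
    (ε : Fin n → Ω → ℝ) (hε : ε = fun i ω => X ω i - β i * Y ω)
    (B₁ : Set ℝ) (hB₁ : MeasurableSet B₁)
    (B : Set Ω) (hB : B = Y ⁻¹' B₁) :
    ∀ i, condCov P B Y (ε i) = 0 := by
  intro i
  set b := Aᵀ *ᵥ a
  set v : Fin n → ℝ := A i - β i • b with hv_def
  have hv : v ⬝ᵥ b = 0 := by
    have hβi : β i = (A i ⬝ᵥ b) / (b ⬝ᵥ b) := by
      rw [hβ, hahat, hS]
      exact one_div_dotProduct_smul_mulVec_apply A a i
    rw [hv_def, hβi]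
    exact sub_div_smul_dotProduct_self b (A i)
  have hYeq : Y = fun ω => a ⬝ᵥ μv + R ω * (b ⬝ᵥ U ω) := by
    rw [hY, hX]
    exact funext fun ω => dotProduct_add_smul_mulVec A a μv (U ω) (R ω)
  have hεeq : ε i = fun ω => (μv i - β i * (a ⬝ᵥ μv)) + R ω * (v ⬝ᵥ U ω) := by
    rw [hε, hY, hX]
    exact funext fun ω => add_smul_mulVec_apply_sub_mul_dotProduct A a μv (U ω) (R ω) i (β i)
  have hYm : Measurable Y := hYeq ▸ by fun_prop
  have hWm : Measurable fun ω => R ω * (v ⬝ᵥ U ω) := by fun_prop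
  have hWint : Integrable (fun ω => R ω * (v ⬝ᵥ U ω)) P := by
    have hXint j : Integrable (fun ω => X ω j) P := (hXL2 j).integrable one_le_two
    have hεint : Integrable (ε i) P :=
      hε ▸ (hXint i).sub ((hY ▸ integrable_const_dotProduct a hXint).const_mul (β i))
    exact (integrable_add_iff_integrable_right' (integrable_const _)).mp (hεeq ▸ hεint)
  have hsymm : P.map (fun ω => (Y ω, R ω * (v ⬝ᵥ U ω))) =
      P.map (fun ω => (Y ω, -(R ω * (v ⬝ᵥ U ω)))) := by
    rw [hYeq]
    exact map_prodMk_neg_of_map_lineReflection_eq hindep hR hU hv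
      (hUrot _ (lineReflection_mul_transpose b)) _
  rw [hB, hεeq]
  exact condCov_const_add_eq_zero_of_map_prodMk_neg hYm hWm
    (map_prodMk_neg_cond_preimage hYm hWm hsymm hB₁) (hWint.cond _) _

theorem regression_residuals_uncorrelated_under_conditioning
    {Ω : Type*} [MeasurableSpace Ω] (P : Measure Ω) [IsProbabilityMeasure P]
    (n : ℕ) (hn : 2 ≤ n)
    (R : Ω → ℝ) (U : Ω → Fin n → ℝ) (hR : Measurable R) (hU : Measurable U)
    (hRpos : ∀ᵐ ω ∂P, 0 < R ω)
    (hR2 : ∫ ω, R ω ^ 2 ∂P = (n : ℝ))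
    (hRL2 : MemLp R 2 P)
    (hUsphere : ∀ᵐ ω ∂P, ∑ i, U ω i ^ 2 = 1)
    (hUrot : ∀ O : Matrix (Fin n) (Fin n) ℝ, O * Oᵀ = 1 →
      Measure.map (fun ω => O *ᵥ U ω) P = Measure.map U P)
    (hindep : IndepFun R U P)
    (μv : Fin n → ℝ) (A : Matrix (Fin n) (Fin n) ℝ) (hA : IsUnit A.det)
    (a : Fin n → ℝ) (ha : a ≠ 0)
    (X : Ω → Fin n → ℝ) (hX : X = fun ω => μv + R ω • (A *ᵥ U ω))
    (Y : Ω → ℝ) (hY : Y = fun ω => a ⬝ᵥ X ω)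
    (hXL2 : ∀ i, MemLp (fun ω => X ω i) 2 P)
    (S : Matrix (Fin n) (Fin n) ℝ) (hS : S = A * Aᵀ)
    (ahat : ℝ) (hahat : ahat = a ⬝ᵥ (S *ᵥ a))
    (β : Fin n → ℝ) (hβ : β = (1 / ahat) • (S *ᵥ a))
    (ε : Fin n → Ω → ℝ) (hε : ε = fun i ω => X ω i - β i * Y ω)
    (B₁ : Set ℝ) (hB₁ : MeasurableSet B₁)
    (B : Set Ω) (hB : B = Y ⁻¹' B₁) (hBpos : 0 < P B) :
    ∀ i, condCov P B Y (ε i) = 0 :=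
  regression_residuals_uncorrelated_under_conditioning_general P n R U hR hU hUrot hindep μv A a X
    hX Y hY hXL2 S hS ahat hahat β hβ ε hε B₁ hB₁ B hB
end

section
/- Let n ≥ 2 and let X = μ + R•(A *ᵥ U) be an elliptically distributed random vector with benchmark Y = a ⬝ᵥ X. For an event B = {Y ∈ B₁} with B₁ Borel, P[B] > 0 and Var_B[Y] > 0, define k(B) := (1/(n−1))·(E_B[R²] − E_B[(Y − a⬝ᵥμ)²]/â) and k'(B) := k(B)·â / Var_B[Y]. Then the normalized conditional covariance matrix satisfies (1/Var_B[Y]) • Var_B[X] = k'(B) • (1/â) • Σ + (1 − k'(B)) • (β βᵀ). -/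
/-!
Put `W = R • U`. As `R` is independent of `U` and the law of `U` is rotation invariant, the law of
`W` is invariant under every orthogonal matrix, and `X = μ + A W`, `Y = a ⬝ μ + v ⬝ W` with
`v = Aᵀ a`, `v ⬝ v = â`. The event `B` depends on `W` only through `v ⬝ W`, so under `P[|B]` the
law of `W` is still invariant under the orthogonal matrices fixing `v`. After rotating `v` onto a
coordinate axis, sign changes and transpositions of the other coordinates show that the
conditional covariance of `W` is `k • 1` plus a multiple of `v vᵀ`, where `k` is the common second
moment of the coordinates orthogonal to `v`; comparing traces gives
`(n - 1) k = E_B ‖W‖² - E_B (v ⬝ W)² / â`, and `‖W‖² = R²`. Finally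
`Var_B X = A (Var_B W) Aᵀ = k Σ + (Var_B Y - k â) β βᵀ`.
-/

open MeasureTheory ProbabilityTheory Matrix

/-- Conditional variance on the event `B`. -/
noncomputable def condVar {Ω : Type*} [MeasurableSpace Ω] (P : Measure Ω) (B : Set Ω)
    (f : Ω → ℝ) : ℝ :=
  condE P B fun ω => (f ω - condE P B f) ^ 2

section OrthogonalMatrices

variable {n : ℕ}

lemma exists_mul_transpose_eq_one_row_eq (i₀ : Fin n) (w : Fin n → ℝ) (hw : w ⬝ᵥ w = 1) :
    ∃ O : Matrix (Fin n) (Fin n) ℝ, O * Oᵀ = 1 ∧ O i₀ = w := by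
  have hunit : Orthonormal ℝ (Set.domRestrict {i₀} fun _ => WithLp.toLp 2 w) := by
    rw [orthonormal_iff_ite]
    rintro ⟨i, rfl⟩ ⟨j, rfl⟩
    simp only [Set.domRestrict_apply, if_true, PiLp.inner_apply]
    simpa [dotProduct, sq] using hw
  obtain ⟨b, hb⟩ := hunit.exists_orthonormalBasis_extension_of_card_eq (by simp)
  refine ⟨Matrix.of fun i j => b i j, ?_, funext fun j => by simp [hb i₀ rfl]⟩
  ext i k
  simpa [PiLp.inner_apply, Matrix.mul_apply, Matrix.one_apply, mul_comm] using
    orthonormal_iff_ite.mp b.orthonormal i k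

lemma dotProduct_mulVec_self_of_mul_transpose_eq_one {O : Matrix (Fin n) (Fin n) ℝ}
    (hO : O * Oᵀ = 1) (v : Fin n → ℝ) : (O *ᵥ v) ⬝ᵥ (O *ᵥ v) = v ⬝ᵥ v := by
  rw [dotProduct_mulVec, ← mulVec_transpose, mulVec_mulVec, mul_eq_one_comm.mp hO, one_mulVec]

def signFlip (k : Fin n) : Matrix (Fin n) (Fin n) ℝ :=
  diagonal fun i => if i = k then -1 else 1

lemma signFlip_mul_transpose (k : Fin n) : signFlip k * (signFlip k)ᵀ = 1 := by
  rw [signFlip, diagonal_transpose, diagonal_mul_diagonal, ← diagonal_one]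
  congr 1
  funext i
  split_ifs <;> norm_num

lemma signFlip_mulVec_apply (k : Fin n) (v : Fin n → ℝ) (i : Fin n) :
    (signFlip k *ᵥ v) i = if i = k then -v i else v i := by
  simp [signFlip, mulVec_diagonal]

lemma permMatrix_mul_transpose (σ : Equiv.Perm (Fin n)) :
    σ.permMatrix ℝ * (σ.permMatrix ℝ)ᵀ = 1 := by
  simp [← permMatrix_mul]

end OrthogonalMatrices

section CovarianceMatrix

variable {Ω ι : Type*} [MeasurableSpace Ω] {P : Measure Ω} {W : Ω → ι → ℝ}

noncomputable def covarianceMatrix (P : Measure Ω) (W : Ω → ι → ℝ) : Matrix ι ι ℝ :=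
  of fun k l => cov[fun ω => W ω k, fun ω => W ω l; P]

lemma memLp_dotProduct [Fintype ι] {p : ENNReal} (hW : ∀ k, MemLp (fun ω => W ω k) p P)
    (v : ι → ℝ) : MemLp (fun ω => v ⬝ᵥ W ω) p P :=
  memLp_finsetSum _ fun k _ => (hW k).const_mul (v k)

lemma covarianceMatrix_const_add_mulVec [Fintype ι] {κ : Type*} [IsProbabilityMeasure P]
    (hW : ∀ k, MemLp (fun ω => W ω k) 2 P) (c : κ → ℝ) (A : Matrix κ ι ℝ) :
    covarianceMatrix P (fun ω => c + A *ᵥ W ω) = A * covarianceMatrix P W * Aᵀ := by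
  ext i j
  have hAW : ∀ i, Integrable (fun ω => (A *ᵥ W ω) i) P :=
    fun i => (memLp_dotProduct hW (A i)).integrable one_le_two
  have hsum := covariance_fun_sum_fun_sum (μ := P) (X := fun k ω => A i k * W ω k)
    (Y := fun l ω => A j l * W ω l) (fun k => (hW k).const_mul _) (fun l => (hW l).const_mul _)
  simp only [covarianceMatrix, of_apply, Pi.add_apply, covariance_const_add_left (hAW i),
    covariance_const_add_right (hAW j)]
  simp only [mulVec, dotProduct, mul_apply, transpose_apply, of_apply, Finset.sum_mul] at hsum ⊢
  rw [hsum, Finset.sum_comm]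
  simp only [covariance_const_mul_left, covariance_const_mul_right]
  exact Finset.sum_congr rfl fun _ _ => Finset.sum_congr rfl fun _ _ => by ring

lemma condVar_eq_covariance (B : Set Ω) (f : Ω → ℝ) : condVar P B f = cov[f, f; P[|B]] := by
  simp only [_root_.condVar, condE, covariance, sq]

lemma condCov_eq_covarianceMatrix (B : Set Ω) (X : Ω → ι → ℝ) (i j : ι) :
    condCov P B (fun ω => X ω i) (fun ω => X ω j) = covarianceMatrix P[|B] X i j :=
  rfl

end CovarianceMatrix

/-- The second moment of `W` per direction orthogonal to `v`; for `μ = P[|B]`, `W = R • U` and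
`v = Aᵀ a` it is the paper's `k(B)`. -/
noncomputable def orthogonalSecondMoment {Ω : Type*} [MeasurableSpace Ω] {n : ℕ} (μ : Measure Ω)
    (W : Ω → Fin n → ℝ) (v : Fin n → ℝ) : ℝ :=
  (∫ ω, W ω ⬝ᵥ W ω ∂μ - (∫ ω, (v ⬝ᵥ W ω) ^ 2 ∂μ) / (v ⬝ᵥ v)) / (n - 1)

lemma orthogonalSecondMoment_smul {Ω : Type*} [MeasurableSpace Ω] {n : ℕ} (μ : Measure Ω)
    (W : Ω → Fin n → ℝ) (v : Fin n → ℝ) {s : ℝ} (hs : s ≠ 0) :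
    orthogonalSecondMoment μ W (s • v) = orthogonalSecondMoment μ W v := by
  simp only [orthogonalSecondMoment, smul_dotProduct, dotProduct_smul, smul_eq_mul, mul_pow,
    integral_const_mul, ← mul_assoc, ← sq]
  rw [mul_div_mul_left _ _ (pow_ne_zero 2 hs)]

section Conditioning

variable {Ω E : Type*} [MeasurableSpace Ω] [MeasurableSpace E] {P : Measure Ω}

lemma MeasureTheory.MemLp.cond {F : Type*} [NormedAddCommGroup F] {f : Ω → F} {p : ENNReal}
    (hf : MemLp f p P) {B : Set Ω} (hB : P B ≠ 0) : MemLp f p P[|B] :=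
  (hf.restrict B).smul_measure (ENNReal.inv_ne_top.mpr hB)

lemma ProbabilityTheory.IdentDistrib.cond_preimage {Z : Ω → E} {T : E → E}
    (h : IdentDistrib (fun ω => T (Z ω)) Z P P) (hZ : Measurable Z) (hT : Measurable T)
    {C : Set E} (hC : MeasurableSet C) (hTC : T ⁻¹' C = C) :
    IdentDistrib (fun ω => T (Z ω)) Z P[|Z ⁻¹' C] P[|Z ⁻¹' C] where
  aemeasurable_fst := (hT.comp hZ).aemeasurable
  aemeasurable_snd := hZ.aemeasurable
  map_eq := by
    ext D hD
    have hinter : Z ⁻¹' C ∩ (fun ω => T (Z ω)) ⁻¹' D = (fun ω => T (Z ω)) ⁻¹' (D ∩ C) := by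
      ext ω
      simp only [Set.mem_inter_iff, Set.mem_preimage, ← Set.mem_preimage (f := T) (s := C), hTC,
        and_comm]
    rw [Measure.map_apply (f := fun ω => T (Z ω)) (hT.comp hZ) hD, Measure.map_apply hZ hD,
      cond_apply (hZ hC), cond_apply (hZ hC), hinter, h.measure_mem_eq (hD.inter hC),
      Set.preimage_inter, Set.inter_comm]

end Conditioning

section StabilizerInvariance

variable {Ω : Type*} [MeasurableSpace Ω] {P : Measure Ω} {n : ℕ} {W : Ω → Fin n → ℝ}
  {i₀ : Fin n}
  (hW : ∀ Q : Matrix (Fin n) (Fin n) ℝ, Q * Qᵀ = 1 → (∀ v, (Q *ᵥ v) i₀ = v i₀) →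
    IdentDistrib (fun ω => Q *ᵥ W ω) W P P)
include hW

lemma integral_apply_eq_zero_of_stabilizer {k : Fin n} (hk : k ≠ i₀) : ∫ ω, W ω k ∂P = 0 := by
  have h := ((hW _ (signFlip_mul_transpose k) fun v => by
    simp [signFlip_mulVec_apply, hk.symm]).comp (measurable_pi_apply k)).integral_eq
  simp only [Function.comp_def, signFlip_mulVec_apply, if_true, integral_neg] at h
  linarith

lemma integral_apply_mul_apply_eq_zero_of_stabilizer {k l : Fin n} (hkl : k ≠ l) :
    ∫ ω, W ω k * W ω l ∂P = 0 := by
  wlog hk : k ≠ i₀ generalizing k l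
  · simp_rw [mul_comm (W _ k)]
    exact this hkl.symm (by rwa [not_not.mp hk, ne_comm] at hkl)
  have h := ((hW _ (signFlip_mul_transpose k) fun v => by
    simp [signFlip_mulVec_apply, hk.symm]).comp
      ((measurable_pi_apply k).mul (measurable_pi_apply l))).integral_eq
  simp only [Function.comp_def, Pi.mul_apply, signFlip_mulVec_apply, if_true, if_neg hkl.symm,
    neg_mul, integral_neg] at h
  linarith

lemma integral_apply_sq_eq_of_stabilizer {k l : Fin n} (hk : k ≠ i₀) (hl : l ≠ i₀) :
    ∫ ω, W ω k ^ 2 ∂P = ∫ ω, W ω l ^ 2 ∂P := by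
  have h := ((hW _ (permMatrix_mul_transpose (Equiv.swap k l)) fun v => by
    simp [permMatrix_mulVec, Equiv.swap_apply_of_ne_of_ne hk.symm hl.symm]).comp
      ((measurable_pi_apply k).pow_const 2)).integral_eq
  simpa [Function.comp_def, permMatrix_mulVec] using h.symm

variable (hL2 : ∀ k, MemLp (fun ω => W ω k) 2 P)
include hL2

lemma integral_apply_sq_eq_orthogonalSecondMoment {k : Fin n} (hk : k ≠ i₀) :
    ∫ ω, W ω k ^ 2 ∂P = orthogonalSecondMoment P W (Pi.single i₀ 1) := by
  have hn : 1 < n := by simpa using Fintype.one_lt_card_iff.mpr ⟨k, i₀, hk⟩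
  have htrace : ∫ ω, W ω ⬝ᵥ W ω ∂P = ∫ ω, W ω i₀ ^ 2 ∂P + (n - 1) * ∫ ω, W ω k ^ 2 ∂P := by
    simp only [dotProduct, ← sq]
    rw [integral_finsetSum _ fun l _ => (hL2 l).integrable_sq,
      ← Finset.add_sum_erase _ _ (Finset.mem_univ i₀),
      Finset.sum_congr rfl fun l hl =>
        integral_apply_sq_eq_of_stabilizer hW (Finset.ne_of_mem_erase hl) hk,
      Finset.sum_const, Finset.card_erase_of_mem (Finset.mem_univ _), Finset.card_univ,
      Fintype.card_fin, nsmul_eq_mul, Nat.cast_sub hn.le, Nat.cast_one]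
  have : (n : ℝ) - 1 ≠ 0 := sub_ne_zero.mpr (by exact_mod_cast hn.ne')
  rw [orthogonalSecondMoment, htrace]
  simp only [single_dotProduct, one_mul, Pi.single_eq_same, div_one]
  field_simp
  ring

lemma covarianceMatrix_eq_of_stabilizer [IsProbabilityMeasure P] :
    covarianceMatrix P W =
      orthogonalSecondMoment P W (Pi.single i₀ 1) • (1 : Matrix _ _ ℝ) +
      (cov[fun ω => W ω i₀, fun ω => W ω i₀; P] - orthogonalSecondMoment P W (Pi.single i₀ 1)) •
        vecMulVec (Pi.single i₀ 1) (Pi.single i₀ 1) := by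
  ext k l
  simp only [covarianceMatrix, of_apply, Matrix.add_apply, Matrix.smul_apply, one_apply,
    vecMulVec_apply, Pi.single_apply, smul_eq_mul]
  rw [covariance_eq_sub (hL2 k) (hL2 l)]
  simp only [Pi.mul_apply]
  by_cases hkl : k = l
  · subst hkl
    by_cases hk : k = i₀
    · subst hk; simp [covariance_eq_sub (hL2 k) (hL2 k)]
    · simp [hk, integral_apply_eq_zero_of_stabilizer hW hk, ← sq,
        integral_apply_sq_eq_orthogonalSecondMoment hW hL2 hk]
  · have hmean : (∫ ω, W ω k ∂P) * ∫ ω, W ω l ∂P = 0 := by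
      by_cases hk : k = i₀
      · subst hk; rw [integral_apply_eq_zero_of_stabilizer hW (Ne.symm hkl), mul_zero]
      · rw [integral_apply_eq_zero_of_stabilizer hW hk, zero_mul]
    rw [integral_apply_mul_apply_eq_zero_of_stabilizer hW hkl, hmean]
    by_cases hk : k = i₀
    · subst hk; simp [hkl, Ne.symm hkl]
    · simp [hkl, hk]

end StabilizerInvariance

section Spherical

variable {Ω : Type*} [MeasurableSpace Ω] {P : Measure Ω} [IsProbabilityMeasure P] {n : ℕ}
  {W : Ω → Fin n → ℝ} (hWm : Measurable W)
  (hW : ∀ Q : Matrix (Fin n) (Fin n) ℝ, Q * Qᵀ = 1 → IdentDistrib (fun ω => Q *ᵥ W ω) W P P)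
  (hL2 : ∀ k, MemLp (fun ω => W ω k) 2 P)
include hWm hW hL2

theorem covarianceMatrix_cond_of_dotProduct_self_eq_one {w : Fin n → ℝ} (hw : w ⬝ᵥ w = 1)
    {C : Set ℝ} (hC : MeasurableSet C) {B : Set Ω} (hB : B = (fun ω => w ⬝ᵥ W ω) ⁻¹' C)
    (hPB : P B ≠ 0) :
    covarianceMatrix P[|B] W =
      orthogonalSecondMoment P[|B] W w • (1 : Matrix _ _ ℝ) +
      (cov[fun ω => w ⬝ᵥ W ω, fun ω => w ⬝ᵥ W ω; P[|B]] - orthogonalSecondMoment P[|B] W w) •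
        vecMulVec w w := by
  obtain ⟨i₀⟩ : Nonempty (Fin n) := by
    by_contra h
    simp [not_nonempty_iff.mp h, dotProduct] at hw
  obtain ⟨O, hO, hOw⟩ := exists_mul_transpose_eq_one_row_eq i₀ w hw
  have := cond_isProbabilityMeasure hPB
  obtain ⟨V, hV⟩ : ∃ V : Ω → Fin n → ℝ, V = fun ω => O *ᵥ W ω := ⟨_, rfl⟩
  have hVm : Measurable V := hV ▸ by fun_prop
  have hVw : ∀ ω, V ω i₀ = w ⬝ᵥ W ω := fun ω => by rw [hV, ← hOw]; rfl
  have hBV : B = V ⁻¹' {v | v i₀ ∈ C} := by rw [hB]; ext ω; simp [hVw]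
  have hVstab : ∀ Q : Matrix (Fin n) (Fin n) ℝ, Q * Qᵀ = 1 → (∀ v, (Q *ᵥ v) i₀ = v i₀) →
      IdentDistrib (fun ω => Q *ᵥ V ω) V P[|B] P[|B] := by
    intro Q hQ hQi₀
    have hQO : (Q * O) * (Q * O)ᵀ = 1 := by
      rw [transpose_mul, Matrix.mul_assoc, ← Matrix.mul_assoc O, hO, Matrix.one_mul, hQ]
    have hsph : IdentDistrib (fun ω => Q *ᵥ V ω) V P P := by
      simpa only [hV, mulVec_mulVec] using (hW _ hQO).trans (hW O hO).symm
    rw [hBV]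
    exact hsph.cond_preimage hVm (Continuous.measurable (by fun_prop))
      (measurableSet_preimage (measurable_pi_apply i₀) hC) (by ext v; simp [hQi₀])
  have hVL2 : ∀ k, MemLp (fun ω => V ω k) 2 P[|B] :=
    fun k => hV ▸ (memLp_dotProduct hL2 (O k)).cond hPB
  have hWV : W = fun ω => 0 + Oᵀ *ᵥ V ω := by
    funext ω; rw [hV, zero_add, mulVec_mulVec, mul_eq_one_comm.mp hO, one_mulVec]
  have hosm : orthogonalSecondMoment P[|B] V (Pi.single i₀ 1) =
      orthogonalSecondMoment P[|B] W w := by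
    simp only [orthogonalSecondMoment, single_dotProduct, one_mul, Pi.single_eq_same, hVw, hw]
    simp only [hV, dotProduct_mulVec_self_of_mul_transpose_eq_one hO]
  have hcol : Oᵀ *ᵥ Pi.single i₀ 1 = w := by rw [mulVec_single_one]; exact hOw
  have hrow : Pi.single i₀ 1 ᵥ* O = w := by rw [single_one_vecMul]; exact hOw
  conv_lhs => rw [hWV, covarianceMatrix_const_add_mulVec hVL2,
    covarianceMatrix_eq_of_stabilizer hVstab hVL2]
  simp only [Matrix.mul_add, Matrix.add_mul, Matrix.mul_smul, Matrix.smul_mul, Matrix.mul_one,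
    transpose_transpose, mul_eq_one_comm.mp hO, mul_vecMulVec, vecMulVec_mul, hcol, hrow, hVw,
    hosm]

theorem covarianceMatrix_cond_of_ne_zero {v : Fin n → ℝ} (hv : v ≠ 0)
    {C : Set ℝ} (hC : MeasurableSet C) {B : Set Ω} (hB : B = (fun ω => v ⬝ᵥ W ω) ⁻¹' C)
    (hPB : P B ≠ 0) :
    covarianceMatrix P[|B] W =
      orthogonalSecondMoment P[|B] W v • (1 : Matrix _ _ ℝ) +
      (cov[fun ω => v ⬝ᵥ W ω, fun ω => v ⬝ᵥ W ω; P[|B]] -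
        orthogonalSecondMoment P[|B] W v * (v ⬝ᵥ v)) •
        vecMulVec ((v ⬝ᵥ v)⁻¹ • v) ((v ⬝ᵥ v)⁻¹ • v) := by
  have hpos : 0 < v ⬝ᵥ v := by simpa using dotProduct_self_star_pos_iff.mpr hv
  obtain ⟨s, hs⟩ : ∃ s, s = √(v ⬝ᵥ v) := ⟨_, rfl⟩
  have hs0 : s ≠ 0 := hs ▸ (Real.sqrt_pos.mpr hpos).ne'
  obtain ⟨w, hwv⟩ : ∃ w, w = s⁻¹ • v := ⟨_, rfl⟩
  have hvw : v = s • w := by rw [hwv, smul_smul, mul_inv_cancel₀ hs0, one_smul]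
  have hw : w ⬝ᵥ w = 1 := by
    rw [hwv, smul_dotProduct, dotProduct_smul, smul_smul, smul_eq_mul, ← sq, inv_pow, hs,
      Real.sq_sqrt hpos.le, inv_mul_cancel₀ hpos.ne']
  have hB' : B = (fun ω => w ⬝ᵥ W ω) ⁻¹' ((fun t => s * t) ⁻¹' C) := by
    rw [hB, hvw]; ext ω; simp [smul_dotProduct]
  rw [covarianceMatrix_cond_of_dotProduct_self_eq_one hWm hW hL2 hw
    (measurableSet_preimage (by fun_prop) hC) hB' hPB, hvw, orthogonalSecondMoment_smul _ _ _ hs0]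
  simp only [smul_dotProduct, dotProduct_smul, smul_eq_mul, covariance_const_mul_left,
    covariance_const_mul_right, hw, smul_vecMulVec, vecMulVec_smul, smul_smul]
  congr 2
  field_simp

theorem covarianceMatrix_cond_const_add_mulVec {κ : Type*} (c : κ → ℝ) (A : Matrix κ (Fin n) ℝ)
    {v : Fin n → ℝ} (hv : v ≠ 0) {C : Set ℝ} (hC : MeasurableSet C) {B : Set Ω}
    (hB : B = (fun ω => v ⬝ᵥ W ω) ⁻¹' C) (hPB : P B ≠ 0) :
    covarianceMatrix P[|B] (fun ω => c + A *ᵥ W ω) =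
      orthogonalSecondMoment P[|B] W v • (A * Aᵀ) +
      (cov[fun ω => v ⬝ᵥ W ω, fun ω => v ⬝ᵥ W ω; P[|B]] -
        orthogonalSecondMoment P[|B] W v * (v ⬝ᵥ v)) •
        vecMulVec (A *ᵥ (v ⬝ᵥ v)⁻¹ • v) (A *ᵥ (v ⬝ᵥ v)⁻¹ • v) := by
  have := cond_isProbabilityMeasure hPB
  rw [covarianceMatrix_const_add_mulVec (fun k => (hL2 k).cond hPB),
    covarianceMatrix_cond_of_ne_zero hWm hW hL2 hv hC hB hPB]
  simp only [Matrix.mul_add, Matrix.add_mul, Matrix.mul_smul, Matrix.smul_mul, Matrix.mul_one,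
    mul_vecMulVec, vecMulVec_mul, ← mulVec_transpose, transpose_transpose]

end Spherical

section Elliptical

variable {Ω : Type*} [MeasurableSpace Ω] {P : Measure Ω} {n : ℕ} {R : Ω → ℝ}
  {U : Ω → Fin n → ℝ}

lemma identDistrib_mulVec_smul_of_indepFun [IsFiniteMeasure P] (hR : Measurable R)
    (hU : Measurable U)
    (hUrot : ∀ O : Matrix (Fin n) (Fin n) ℝ, O * Oᵀ = 1 →
      Measure.map (fun ω => O *ᵥ U ω) P = Measure.map U P)
    (hindep : IndepFun R U P) {Q : Matrix (Fin n) (Fin n) ℝ} (hQ : Q * Qᵀ = 1) :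
    IdentDistrib (fun ω => Q *ᵥ (R ω • U ω)) (fun ω => R ω • U ω) P P := by
  have hQU : Measurable fun ω => Q *ᵥ U ω := by fun_prop
  have hpair : IdentDistrib (fun ω => (R ω, Q *ᵥ U ω)) (fun ω => (R ω, U ω)) P P :=
    ⟨by fun_prop, by fun_prop, by
      rw [(indepFun_iff_map_prod_eq_prod_map_map hR.aemeasurable hQU.aemeasurable).mp
          (hindep.comp (ψ := fun u => Q *ᵥ u) measurable_id (by fun_prop)),
        hindep.map_prod_eq_prod_map_map hR.aemeasurable hU.aemeasurable, hUrot Q hQ]⟩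
  simpa [Function.comp_def, mulVec_smul] using
    hpair.comp (u := fun p : ℝ × (Fin n → ℝ) => p.1 • p.2) (by fun_prop)

lemma memLp_smul_apply_of_sum_sq_eq_one (hRL2 : MemLp R 2 P) (hU : Measurable U)
    (hUsphere : ∀ᵐ ω ∂P, ∑ i, U ω i ^ 2 = 1) (k : Fin n) :
    MemLp (fun ω => (R ω • U ω) k) 2 P := by
  refine hRL2.of_le (hRL2.1.mul (measurable_pi_apply k |>.comp hU).aestronglyMeasurable) ?_
  filter_upwards [hUsphere] with ω hω
  have hUk : |U ω k| ≤ 1 := by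
    rw [← sq_le_one_iff_abs_le_one, ← hω]
    exact Finset.single_le_sum (fun i _ => sq_nonneg (U ω i)) (Finset.mem_univ k)
  simpa [abs_mul] using mul_le_of_le_one_right (abs_nonneg (R ω)) hUk

lemma integral_sq_eq_integral_smul_dotProduct_smul {μ : Measure Ω}
    (hUsphere : ∀ᵐ ω ∂μ, ∑ i, U ω i ^ 2 = 1) :
    ∫ ω, R ω ^ 2 ∂μ = ∫ ω, (R ω • U ω) ⬝ᵥ (R ω • U ω) ∂μ :=
  integral_congr_ae <| hUsphere.mono fun ω hω => by
    simp [dotProduct, ← sq, mul_pow, ← Finset.mul_sum, hω]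

end Elliptical

theorem normalized_conditional_covariance_matrix_elliptical_general
    {Ω : Type*} [MeasurableSpace Ω] (P : Measure Ω) [IsProbabilityMeasure P]
    (n : ℕ)
    (R : Ω → ℝ) (U : Ω → Fin n → ℝ) (hR : Measurable R) (hU : Measurable U)
    (hRL2 : MemLp R 2 P)
    (hUsphere : ∀ᵐ ω ∂P, ∑ i, U ω i ^ 2 = 1)
    (hUrot : ∀ O : Matrix (Fin n) (Fin n) ℝ, O * Oᵀ = 1 →
      Measure.map (fun ω => O *ᵥ U ω) P = Measure.map U P)
    (hindep : IndepFun R U P)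
    (μv : Fin n → ℝ) (A : Matrix (Fin n) (Fin n) ℝ)
    (a : Fin n → ℝ)
    (X : Ω → Fin n → ℝ) (hX : X = fun ω => μv + R ω • (A *ᵥ U ω))
    (Y : Ω → ℝ) (hY : Y = fun ω => a ⬝ᵥ X ω)
    (S : Matrix (Fin n) (Fin n) ℝ) (hS : S = A * Aᵀ)
    (ahat : ℝ) (hahat : ahat = a ⬝ᵥ (S *ᵥ a))
    (β : Fin n → ℝ) (hβ : β = (1 / ahat) • (S *ᵥ a))
    (B₁ : Set ℝ) (hB₁ : MeasurableSet B₁)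
    (B : Set Ω) (hB : B = Y ⁻¹' B₁) (hBpos : 0 < P B)
    (hVarYpos : 0 < condVar P B Y)
    (kB : ℝ)
    (hkB : kB = (1 / ((n : ℝ) - 1)) *
      (condE P B (fun ω => R ω ^ 2) - condE P B (fun ω => (Y ω - a ⬝ᵥ μv) ^ 2) / ahat))
    (kB' : ℝ) (hkB' : kB' = kB * ahat / condVar P B Y) :
    ∀ i j, (1 / condVar P B Y) * condCov P B (fun ω => X ω i) (fun ω => X ω j)
      = kB' * ((1 / ahat) * S i j) + (1 - kB') * (β i * β j) := by
  intro i j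
  have := cond_isProbabilityMeasure hBpos.ne'
  obtain ⟨W, hW⟩ : ∃ W : Ω → Fin n → ℝ, W = fun ω => R ω • U ω := ⟨_, rfl⟩
  have hWL2 : ∀ k, MemLp (fun ω => W ω k) 2 P := by
    rw [hW]; exact memLp_smul_apply_of_sum_sq_eq_one hRL2 hU hUsphere
  obtain ⟨v, hv⟩ : ∃ v, v = Aᵀ *ᵥ a := ⟨_, rfl⟩
  have hahat_v : ahat = v ⬝ᵥ v := by
    rw [hahat, hS, hv, ← mulVec_mulVec, dotProduct_mulVec a A, mulVec_transpose]
  have hXW : X = fun ω => μv + A *ᵥ W ω := by simp [hX, hW, mulVec_smul]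
  have hYW : Y = fun ω => a ⬝ᵥ μv + v ⬝ᵥ W ω := by
    simp [hY, hXW, dotProduct_mulVec, hv, mulVec_transpose]
  have hVarY : condVar P B Y = cov[fun ω => v ⬝ᵥ W ω, fun ω => v ⬝ᵥ W ω; P[|B]] := by
    have hint := ((memLp_dotProduct hWL2 v).cond hBpos.ne').integrable one_le_two
    rw [condVar_eq_covariance, hYW, covariance_const_add_left hint,
      covariance_const_add_right hint]
  have hv0 : v ≠ 0 := by
    rintro rfl
    simp [hVarY] at hVarYpos
  have hkB_eq : kB = orthogonalSecondMoment P[|B] W v := by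
    rw [hkB, orthogonalSecondMoment, hahat_v, condE, condE,
      integral_sq_eq_integral_smul_dotProduct_smul (cond_absolutelyContinuous.ae_le hUsphere)]
    simp only [hW, hYW, add_sub_cancel_left]
    ring
  have hβv : A *ᵥ (v ⬝ᵥ v)⁻¹ • v = β := by
    rw [hβ, hS, hahat_v, hv, ← mulVec_mulVec, mulVec_smul, one_div]
  rw [condCov_eq_covarianceMatrix, hXW, covarianceMatrix_cond_const_add_mulVec
      (by rw [hW]; fun_prop)
      (fun Q hQ => by rw [hW]; exact identDistrib_mulVec_smul_of_indepFun hR hU hUrot hindep hQ)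
      hWL2 μv A hv0 (measurableSet_preimage (measurable_const_add (a ⬝ᵥ μv)) hB₁)
      (by rw [hB, hYW]; rfl) hBpos.ne',
    hkB', hkB_eq, ← hVarY, hβv, ← hahat_v, ← hS]
  simp only [Matrix.add_apply, Matrix.smul_apply, vecMulVec_apply, smul_eq_mul]
  have hahat0 : ahat ≠ 0 := by simpa [hahat_v] using hv0
  field_simp

theorem normalized_conditional_covariance_matrix_elliptical
    {Ω : Type*} [MeasurableSpace Ω] (P : Measure Ω) [IsProbabilityMeasure P]
    (n : ℕ) (hn : 2 ≤ n)
    (R : Ω → ℝ) (U : Ω → Fin n → ℝ) (hR : Measurable R) (hU : Measurable U)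
    (hRpos : ∀ᵐ ω ∂P, 0 < R ω)
    (hR2 : ∫ ω, R ω ^ 2 ∂P = (n : ℝ))
    (hRL2 : MemLp R 2 P)
    (hUsphere : ∀ᵐ ω ∂P, ∑ i, U ω i ^ 2 = 1)
    (hUrot : ∀ O : Matrix (Fin n) (Fin n) ℝ, O * Oᵀ = 1 →
      Measure.map (fun ω => O *ᵥ U ω) P = Measure.map U P)
    (hindep : IndepFun R U P)
    (μv : Fin n → ℝ) (A : Matrix (Fin n) (Fin n) ℝ) (hA : IsUnit A.det)
    (a : Fin n → ℝ) (ha : a ≠ 0)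
    (X : Ω → Fin n → ℝ) (hX : X = fun ω => μv + R ω • (A *ᵥ U ω))
    (Y : Ω → ℝ) (hY : Y = fun ω => a ⬝ᵥ X ω)
    (hXL2 : ∀ i, MemLp (fun ω => X ω i) 2 P)
    (S : Matrix (Fin n) (Fin n) ℝ) (hS : S = A * Aᵀ)
    (ahat : ℝ) (hahat : ahat = a ⬝ᵥ (S *ᵥ a))
    (β : Fin n → ℝ) (hβ : β = (1 / ahat) • (S *ᵥ a))
    (B₁ : Set ℝ) (hB₁ : MeasurableSet B₁)
    (B : Set Ω) (hB : B = Y ⁻¹' B₁) (hBpos : 0 < P B)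
    (hVarYpos : 0 < condVar P B Y)
    (kB : ℝ)
    (hkB : kB = (1 / ((n : ℝ) - 1)) *
      (condE P B (fun ω => R ω ^ 2) - condE P B (fun ω => (Y ω - a ⬝ᵥ μv) ^ 2) / ahat))
    (kB' : ℝ) (hkB' : kB' = kB * ahat / condVar P B Y) :
    ∀ i j, (1 / condVar P B Y) * condCov P B (fun ω => X ω i) (fun ω => X ω j)
      = kB' * ((1 / ahat) * S i j) + (1 - kB') * (β i * β j) :=
  normalized_conditional_covariance_matrix_elliptical_general P n R U hR hU hRL2 hUsphere hUrot
    hindep μv A a X hX Y hY S hS ahat hahat β hβ B₁ hB₁ B hB hBpos hVarYpos kB hkB kB' hkB'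
end
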